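/- Let G = {1,…,n}^3 and let f : G → G be monotone, non-expansive in ℓ∞, and with unit displacements (‖f(x) − x‖∞ ≤ 1 for all x ∈ G). Let l and u be integers with 1 ≤ l ≤ u ≤ n and u = l or u = l + 1. If there exists x ∈ G with x_3 = l and x ≤ f(x), and there exists y ∈ G with y_3 = u and f(y) ≤ y, then there exists a fixed point z of f (f(z) = z) with z_3 = l or z_3 = u. -/
import Mathlib


/-- Membership in the grid `{1, …, n}^3 ⊆ ℤ^3`. -/
def inGrid3 (n : ℕ) (x : Fin 3 → ℤ) : Prop :=
  ∀ i, 1 ≤ x i ∧ x i ≤ (n : ℤ)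

/-- The ℓ∞ distance `‖x − y‖∞ = max_i |x_i − y_i|` (as a natural number). -/
def linf3 (x y : Fin 3 → ℤ) : ℕ :=
  Finset.univ.sup fun i => (x i - y i).natAbs

namespace FP3aux

lemma linf3_le_iff {x y : Fin 3 → ℤ} {d : ℕ} :
    linf3 x y ≤ d ↔ ∀ i, (x i - y i).natAbs ≤ d := by
  simp [linf3, Finset.sup_le_iff]

lemma coord_le_linf3 (x y : Fin 3 → ℤ) (i : Fin 3) :
    (x i - y i).natAbs ≤ linf3 x y := by
  have := Finset.le_sup (f := fun j => (x j - y j).natAbs) (Finset.mem_univ i)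
  simpa [linf3] using this

def gm (f : (Fin 3 → ℤ) → (Fin 3 → ℤ)) (a b : ℤ) (p : Fin 3 → ℤ) : Fin 3 → ℤ :=
  fun i => if i = (2 : Fin 3) then max a (min b (f p 2)) else f p i

lemma gm_ne (f : (Fin 3 → ℤ) → (Fin 3 → ℤ)) (a b : ℤ) (p : Fin 3 → ℤ)
    {i : Fin 3} (hi : i ≠ 2) : gm f a b p i = f p i := if_neg hi

lemma gm_two (f : (Fin 3 → ℤ) → (Fin 3 → ℤ)) (a b : ℤ) (p : Fin 3 → ℤ) :
    gm f a b p 2 = max a (min b (f p 2)) := if_pos rfl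

lemma clamp_nonexp (a b v w : ℤ) :
    (max a (min b v) - max a (min b w)).natAbs ≤ (v - w).natAbs := by
  simp only [max_def, min_def]
  split_ifs <;> omega

section maps

variable {n : ℕ} {f : (Fin 3 → ℤ) → (Fin 3 → ℤ)}

lemma gm_grid (hrange : ∀ x, inGrid3 n x → inGrid3 n (f x))
    {a b : ℤ} (ha : 1 ≤ a) (hb : b ≤ (n : ℤ)) (hab : a ≤ b)
    {p : Fin 3 → ℤ} (hp : inGrid3 n p) : inGrid3 n (gm f a b p) := by
  intro i
  by_cases h : i = (2 : Fin 3)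
  · subst h
    rw [gm_two]
    exact ⟨le_trans ha (le_max_left _ _), max_le (hab.trans hb) ((min_le_left _ _).trans hb)⟩
  · rw [gm_ne f a b p h]
    exact hrange p hp i

lemma gm_mono (hrange : ∀ x, inGrid3 n x → inGrid3 n (f x))
    (hmono : ∀ x y, inGrid3 n x → inGrid3 n y → x ≤ y → f x ≤ f y)
    {a b : ℤ} {p q : Fin 3 → ℤ} (hp : inGrid3 n p) (hq : inGrid3 n q)
    (hpq : p ≤ q) : gm f a b p ≤ gm f a b q := by
  intro i
  have hf : f p ≤ f q := hmono p q hp hq hpq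
  by_cases h : i = (2 : Fin 3)
  · subst h
    rw [gm_two, gm_two]
    exact max_le_max le_rfl (min_le_min le_rfl (hf 2))
  · rw [gm_ne f a b p h, gm_ne f a b q h]
    exact hf i

lemma gm_nonexp (hnonexp : ∀ x y, inGrid3 n x → inGrid3 n y → linf3 (f x) (f y) ≤ linf3 x y)
    {a b : ℤ} {p q : Fin 3 → ℤ} (hp : inGrid3 n p) (hq : inGrid3 n q) :
    linf3 (gm f a b p) (gm f a b q) ≤ linf3 p q := by
  rw [linf3_le_iff]
  intro i
  have hfn : ∀ j, (f p j - f q j).natAbs ≤ linf3 p q :=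
    fun j => le_trans (coord_le_linf3 _ _ j) (hnonexp p q hp hq)
  by_cases h : i = (2 : Fin 3)
  · subst h
    rw [gm_two, gm_two]
    exact le_trans (clamp_nonexp a b _ _) (hfn 2)
  · rw [gm_ne f a b p h, gm_ne f a b q h]
    exact hfn i

lemma up_step (hrange : ∀ x, inGrid3 n x → inGrid3 n (f x))
    (hmono : ∀ x y, inGrid3 n x → inGrid3 n y → x ≤ y → f x ≤ f y)
    {a b : ℤ} (ha : 1 ≤ a) (hb : b ≤ (n : ℤ)) (hab : a ≤ b)
    {w : Fin 3 → ℤ}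
    (hw : inGrid3 n w ∧ a ≤ w 2 ∧ w 2 ≤ b ∧ w ≤ f w) :
    (inGrid3 n (gm f a b w) ∧ a ≤ gm f a b w 2 ∧ gm f a b w 2 ≤ b ∧
      gm f a b w ≤ f (gm f a b w)) ∧ w ≤ gm f a b w := by
  obtain ⟨hg, h1, h2, hwf⟩ := hw
  have hg' : inGrid3 n (gm f a b w) := gm_grid hrange ha hb hab hg
  have hle : w ≤ gm f a b w := by
    intro i
    by_cases h : i = (2 : Fin 3)
    · subst h
      rw [gm_two]
      exact le_max_of_le_right (le_min h2 (hwf 2))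
    · rw [gm_ne f a b w h]
      exact hwf i
  have hmono1 : f w ≤ f (gm f a b w) := hmono _ _ hg hg' hle
  refine ⟨⟨hg', ?_, ?_, ?_⟩, hle⟩
  · rw [gm_two]; exact le_max_left _ _
  · rw [gm_two]; exact max_le hab (min_le_left _ _)
  · intro i
    by_cases h : i = (2 : Fin 3)
    · subst h
      rw [gm_two]
      have hfw2 : a ≤ f w 2 := le_trans h1 (hwf 2)
      exact le_trans (max_le hfw2 (min_le_right _ _)) (hmono1 2)
    · rw [gm_ne f a b _ h]
      exact hmono1 i

lemma down_step (hrange : ∀ x, inGrid3 n x → inGrid3 n (f x))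
    (hmono : ∀ x y, inGrid3 n x → inGrid3 n y → x ≤ y → f x ≤ f y)
    {a b : ℤ} (ha : 1 ≤ a) (hb : b ≤ (n : ℤ)) (hab : a ≤ b)
    {w : Fin 3 → ℤ}
    (hw : inGrid3 n w ∧ a ≤ w 2 ∧ w 2 ≤ b ∧ f w ≤ w) :
    (inGrid3 n (gm f a b w) ∧ a ≤ gm f a b w 2 ∧ gm f a b w 2 ≤ b ∧
      f (gm f a b w) ≤ gm f a b w) ∧ gm f a b w ≤ w := by
  obtain ⟨hg, h1, h2, hwf⟩ := hw
  have hg' : inGrid3 n (gm f a b w) := gm_grid hrange ha hb hab hg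
  have hle : gm f a b w ≤ w := by
    intro i
    by_cases h : i = (2 : Fin 3)
    · subst h
      rw [gm_two]
      exact max_le h1 ((min_le_right _ _).trans (hwf 2))
    · rw [gm_ne f a b w h]
      exact hwf i
  have hmono1 : f (gm f a b w) ≤ f w := hmono _ _ hg' hg hle
  refine ⟨⟨hg', ?_, ?_, ?_⟩, hle⟩
  · rw [gm_two]; exact le_max_left _ _
  · rw [gm_two]; exact max_le hab (min_le_left _ _)
  · intro i
    by_cases h : i = (2 : Fin 3)
    · subst h
      rw [gm_two]
      have hfwb : f w 2 ≤ b := (hwf 2).trans h2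
      exact le_trans (hmono1 2) (le_max_of_le_right (le_min hfwb le_rfl))
    · rw [gm_ne f a b _ h]
      exact hmono1 i

end maps

section stab

variable {n : ℕ}

lemma stab_down (T : (Fin 3 → ℤ) → (Fin 3 → ℤ)) (P : (Fin 3 → ℤ) → Prop)
    (hPgrid : ∀ w, P w → inGrid3 n w)
    (hPT : ∀ w, P w → P (T w))
    (hle : ∀ w, P w → T w ≤ w)
    (c : Fin 3 → ℤ) (hc : P c) :
    P (T^[3*n] c) ∧ T^[3*n] c ≤ c ∧ T (T^[3*n] c) = T^[3*n] c := by
  have hPk : ∀ k, P (T^[k] c) := by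
    intro k
    induction k with
    | zero => simpa using hc
    | succ k ih => rw [Function.iterate_succ_apply']; exact hPT _ ih
  have hdec : ∀ k, T^[k+1] c ≤ T^[k] c := by
    intro k
    rw [Function.iterate_succ_apply']
    exact hle _ (hPk k)
  have hlec : ∀ k, T^[k] c ≤ c := by
    intro k
    induction k with
    | zero => simp
    | succ k ih => exact (hdec k).trans ih
  have key : ∃ k, k ≤ 3*n ∧ T (T^[k] c) = T^[k] c := by
    by_contra hcon
    push_neg at hcon
    have hsum : ∀ k, k ≤ 3*n → (∑ i, (T^[k] c) i) + k ≤ ∑ i, c i := by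
      intro k hk
      induction k with
      | zero => simp
      | succ k ih =>
        have ihh := ih (Nat.le_of_succ_le hk)
        have hne := hcon k (Nat.le_of_succ_le hk)
        have hlt : (∑ i, (T^[k+1] c) i) < ∑ i, (T^[k] c) i := by
          apply Finset.sum_lt_sum
          · intro i _; exact hdec k i
          · by_contra hno
            push_neg at hno
            apply hne
            have : T^[k+1] c = T^[k] c :=
              funext fun i => le_antisymm (hdec k i) (hno i (Finset.mem_univ i))
            rw [Function.iterate_succ_apply'] at this
            exact this
        push_cast
        push_cast at ihh
        omega
    have h1 := hsum (3*n) le_rfl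
    have hgz := hPgrid _ (hPk (3*n))
    have hgc := hPgrid _ hc
    rw [Fin.sum_univ_three, Fin.sum_univ_three] at h1
    have a0 := hgz 0; have a1 := hgz 1; have a2 := hgz 2
    have b0 := hgc 0; have b1 := hgc 1; have b2 := hgc 2
    omega
  obtain ⟨k, hk, hfix⟩ := key
  have hstable : ∀ j, T^[k + j] c = T^[k] c := by
    intro j
    induction j with
    | zero => rfl
    | succ j ih =>
      rw [show k + (j+1) = (k+j)+1 by ring, Function.iterate_succ_apply', ih, hfix]
  have h3n : T^[3*n] c = T^[k] c := by
    rw [show 3*n = k + (3*n - k) by omega]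
    exact hstable _
  refine ⟨hPk _, hlec _, ?_⟩
  rw [h3n, hfix]

lemma stab_up (T : (Fin 3 → ℤ) → (Fin 3 → ℤ)) (P : (Fin 3 → ℤ) → Prop)
    (hPgrid : ∀ w, P w → inGrid3 n w)
    (hPT : ∀ w, P w → P (T w))
    (hle : ∀ w, P w → w ≤ T w)
    (c : Fin 3 → ℤ) (hc : P c) :
    P (T^[3*n] c) ∧ c ≤ T^[3*n] c ∧ T (T^[3*n] c) = T^[3*n] c := by
  have hPk : ∀ k, P (T^[k] c) := by
    intro k
    induction k with
    | zero => simpa using hc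
    | succ k ih => rw [Function.iterate_succ_apply']; exact hPT _ ih
  have hdec : ∀ k, T^[k] c ≤ T^[k+1] c := by
    intro k
    rw [Function.iterate_succ_apply']
    exact hle _ (hPk k)
  have hlec : ∀ k, c ≤ T^[k] c := by
    intro k
    induction k with
    | zero => simp
    | succ k ih => exact ih.trans (hdec k)
  have key : ∃ k, k ≤ 3*n ∧ T (T^[k] c) = T^[k] c := by
    by_contra hcon
    push_neg at hcon
    have hsum : ∀ k, k ≤ 3*n → (∑ i, c i) + k ≤ ∑ i, (T^[k] c) i := by
      intro k hk
      induction k with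
      | zero => simp
      | succ k ih =>
        have ihh := ih (Nat.le_of_succ_le hk)
        have hne := hcon k (Nat.le_of_succ_le hk)
        have hlt : (∑ i, (T^[k] c) i) < ∑ i, (T^[k+1] c) i := by
          apply Finset.sum_lt_sum
          · intro i _; exact hdec k i
          · by_contra hno
            push_neg at hno
            apply hne
            have : T^[k+1] c = T^[k] c :=
              funext fun i => le_antisymm (hno i (Finset.mem_univ i)) (hdec k i)
            rw [Function.iterate_succ_apply'] at this
            exact this
        push_cast
        push_cast at ihh
        omega
    have h1 := hsum (3*n) le_rfl
    have hgz := hPgrid _ (hPk (3*n))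
    have hgc := hPgrid _ hc
    rw [Fin.sum_univ_three, Fin.sum_univ_three] at h1
    have a0 := hgz 0; have a1 := hgz 1; have a2 := hgz 2
    have b0 := hgc 0; have b1 := hgc 1; have b2 := hgc 2
    omega
  obtain ⟨k, hk, hfix⟩ := key
  have hstable : ∀ j, T^[k + j] c = T^[k] c := by
    intro j
    induction j with
    | zero => rfl
    | succ j ih =>
      rw [show k + (j+1) = (k+j)+1 by ring, Function.iterate_succ_apply', ih, hfix]
  have h3n : T^[3*n] c = T^[k] c := by
    rw [show 3*n = k + (3*n - k) by omega]
    exact hstable _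
  refine ⟨hPk _, hlec _, ?_⟩
  rw [h3n, hfix]

lemma iter_nonexp (T : (Fin 3 → ℤ) → (Fin 3 → ℤ)) (P : (Fin 3 → ℤ) → Prop)
    (hPT : ∀ w, P w → P (T w))
    (hTnon : ∀ p q, P p → P q → linf3 (T p) (T q) ≤ linf3 p q)
    (p q : Fin 3 → ℤ) (hp : P p) (hq : P q) (N : ℕ) :
    linf3 (T^[N] p) (T^[N] q) ≤ linf3 p q := by
  induction N with
  | zero => simp
  | succ N ih =>
    have hPp : ∀ k, P (T^[k] p) := by
      intro k
      induction k with
      | zero => simpa using hp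
      | succ k ih2 => rw [Function.iterate_succ_apply']; exact hPT _ ih2
    have hPq : ∀ k, P (T^[k] q) := by
      intro k
      induction k with
      | zero => simpa using hq
      | succ k ih2 => rw [Function.iterate_succ_apply']; exact hPT _ ih2
    rw [Function.iterate_succ_apply', Function.iterate_succ_apply']
    exact le_trans (hTnon _ _ (hPp N) (hPq N)) ih

lemma ivt (σ : ℕ → ℤ) (d : ℕ) (h0 : σ 0 = -1) (hd : σ d = 1)
    (hstep : ∀ k, (σ (k+1) - σ k).natAbs ≤ 1) : ∃ k, k ≤ d ∧ σ k = 0 := by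
  have hex : ∃ k, 0 ≤ σ k := ⟨d, by omega⟩
  classical
  have hk : 0 ≤ σ (Nat.find hex) := Nat.find_spec hex
  have hkd : Nat.find hex ≤ d := Nat.find_le (by omega)
  have hk0 : Nat.find hex ≠ 0 := by
    intro h
    rw [h, h0] at hk
    omega
  obtain ⟨j, hj⟩ : ∃ j, Nat.find hex = j + 1 := ⟨Nat.find hex - 1, by omega⟩
  have hjlt : ¬ 0 ≤ σ j := Nat.find_min hex (by omega)
  have hs := hstep j
  rw [hj] at hk hkd
  exact ⟨j+1, hkd, by omega⟩

end stab

end FP3aux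


open FP3aux in
/-- If slice `l` contains an up-set point and slice `u ∈ {l, l+1}` contains a
down-set point, then one of the two slices contains a fixed point. -/
theorem fixed_point_in_two_slices (n : ℕ) (hn : 1 ≤ n)
    (f : (Fin 3 → ℤ) → (Fin 3 → ℤ))
    (hrange : ∀ x, inGrid3 n x → inGrid3 n (f x))
    (hmono : ∀ x y, inGrid3 n x → inGrid3 n y → x ≤ y → f x ≤ f y)
    (hnonexp : ∀ x y, inGrid3 n x → inGrid3 n y → linf3 (f x) (f y) ≤ linf3 x y)
    (hunit : ∀ x, inGrid3 n x → linf3 (f x) x ≤ 1)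
    (l u : ℤ) (hl : 1 ≤ l) (hlu : l ≤ u) (hun : u ≤ (n : ℤ))
    (hcase : u = l ∨ u = l + 1)
    (hup : ∃ x, inGrid3 n x ∧ x 2 = l ∧ x ≤ f x)
    (hdn : ∃ y, inGrid3 n y ∧ y 2 = u ∧ f y ≤ y) :
    ∃ z, inGrid3 n z ∧ f z = z ∧ (z 2 = l ∨ z 2 = u) := by
  classical
  obtain ⟨x, hxg, hx2, hxf⟩ := hup
  obtain ⟨y, hyg, hy2, hyf⟩ := hdn
  have hcoordunit : ∀ p, inGrid3 n p → ∀ i, (f p i - p i).natAbs ≤ 1 :=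
    fun p hp i => le_trans (coord_le_linf3 _ _ i) (hunit p hp)
  have h1u : (1 : ℤ) ≤ u := hl.trans hlu
  -- Part A : iterate the [l,u]-clamped map from x
  have hx1 : inGrid3 n x ∧ l ≤ x 2 ∧ x 2 ≤ u ∧ x ≤ f x :=
    ⟨hxg, le_of_eq hx2.symm, hx2 ▸ hlu, hxf⟩
  obtain ⟨hz1, -, hzfix⟩ :=
    stab_up (gm f l u) (fun w => inGrid3 n w ∧ l ≤ w 2 ∧ w 2 ≤ u ∧ w ≤ f w)
      (fun w hw => hw.1)
      (fun w hw => (up_step hrange hmono hl hun hlu hw).1)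
      (fun w hw => (up_step hrange hmono hl hun hlu hw).2) x hx1
  set z := (gm f l u)^[3*n] x with hzdef
  clear_value z
  obtain ⟨hzg, hzl, hzu, hzf⟩ := hz1
  have hzne : ∀ i : Fin 3, i ≠ 2 → f z i = z i := by
    intro i hi
    have h := congrFun hzfix i
    rwa [gm_ne f l u z hi] at h
  have hz2eq : max l (min u (f z 2)) = z 2 := by
    have h := congrFun hzfix 2
    rwa [gm_two] at h
  by_cases hfz2 : f z 2 ≤ u
  · -- z is a genuine fixed point with z 2 ∈ [l,u]
    have hz2 : z 2 = f z 2 := by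
      rw [← hz2eq, min_eq_right hfz2, max_eq_right (hzl.trans (hzf 2))]
    refine ⟨z, hzg, funext fun i => ?_, by rcases hcase with h | h <;> omega⟩
    by_cases h : i = (2 : Fin 3)
    · subst h; exact hz2.symm
    · exact hzne i h
  · push_neg at hfz2
    have hz2u : z 2 = u := by
      rw [← hz2eq, min_eq_left (by omega), max_eq_right hlu]
    have hfz2eq : f z 2 = u + 1 := by
      have := hcoordunit z hzg 2
      omega
    -- Part B : iterate the [u,u]-clamped map from y
    have hy1 : inGrid3 n y ∧ u ≤ y 2 ∧ y 2 ≤ u ∧ f y ≤ y :=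
      ⟨hyg, le_of_eq hy2.symm, le_of_eq hy2, hyf⟩
    obtain ⟨hw1, -, hwfix⟩ :=
      stab_down (gm f u u) (fun w => inGrid3 n w ∧ u ≤ w 2 ∧ w 2 ≤ u ∧ f w ≤ w)
        (fun w hw => hw.1)
        (fun w hw => (down_step hrange hmono h1u hun le_rfl hw).1)
        (fun w hw => (down_step hrange hmono h1u hun le_rfl hw).2) y hy1
    set w := (gm f u u)^[3*n] y with hwdef
    clear_value w
    obtain ⟨hwg, hwl, hwu, hwff⟩ := hw1
    have hwne : ∀ i : Fin 3, i ≠ 2 → f w i = w i := by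
      intro i hi
      have h := congrFun hwfix i
      rwa [gm_ne f u u w hi] at h
    have hw2eq : max u (min u (f w 2)) = w 2 := by
      have h := congrFun hwfix 2
      rwa [gm_two] at h
    have hw2u : w 2 = u := by
      rw [← hw2eq, max_eq_left (min_le_left _ _)]
    by_cases hfw2 : f w 2 = u
    · refine ⟨w, hwg, funext fun i => ?_, Or.inr hw2u⟩
      by_cases h : i = (2 : Fin 3)
      · subst h; rw [hfw2, hw2u]
      · exact hwne i h
    · have hfw2eq : f w 2 = u - 1 := by
        have h1 := hcoordunit w hwg 2
        have h2 : f w 2 ≤ w 2 := hwff 2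
        have h3 : w 2 = u := hw2u
        have h4 : f w 2 ≠ u := hfw2
        omega
      -- Core intermediate value argument in slice u
      have hgz : gm f u u z = z := by
        funext i
        by_cases h : i = (2 : Fin 3)
        · subst h
          rw [gm_two, hfz2eq, hz2u, min_eq_left (by omega), max_self]
        · rw [gm_ne f u u z h]; exact hzne i h
      have hgw : gm f u u w = w := by
        funext i
        by_cases h : i = (2 : Fin 3)
        · subst h
          rw [gm_two, hfw2eq, hw2u, min_eq_right (by omega), max_eq_left (by omega)]
        · rw [gm_ne f u u w h]; exact hwne i h
      have hQT : ∀ v, (inGrid3 n v ∧ gm f u u v ≤ v) →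
          (inGrid3 n (gm f u u v) ∧ gm f u u (gm f u u v) ≤ gm f u u v) :=
        fun v hv => ⟨gm_grid hrange h1u hun le_rfl hv.1,
          gm_mono hrange hmono (gm_grid hrange h1u hun le_rfl hv.1) hv.1 hv.2⟩
      have hQ'T : ∀ v, (inGrid3 n v ∧ v ≤ gm f u u v) →
          (inGrid3 n (gm f u u v) ∧ gm f u u v ≤ gm f u u (gm f u u v)) :=
        fun v hv => ⟨gm_grid hrange h1u hun le_rfl hv.1,
          gm_mono hrange hmono hv.1 (gm_grid hrange h1u hun le_rfl hv.1) hv.2⟩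
      -- p : fixed point of gm f u u below z ⊓ w, with f p 2 = u - 1
      set m : Fin 3 → ℤ := fun i => min (z i) (w i) with hm
      clear_value m
      have hmi : ∀ i, m i = min (z i) (w i) := fun i => by simp only [hm]
      have hmg : inGrid3 n m := by
        intro i
        rw [hmi i]
        exact ⟨le_min (hzg i).1 (hwg i).1, (min_le_left _ _).trans (hzg i).2⟩
      have hmz : m ≤ z := by intro i; rw [hmi i]; exact min_le_left _ _
      have hmw : m ≤ w := by intro i; rw [hmi i]; exact min_le_right _ _
      have hQm : inGrid3 n m ∧ gm f u u m ≤ m := by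
        refine ⟨hmg, fun i => ?_⟩
        have h1 := gm_mono (a := u) (b := u) hrange hmono hmg hzg hmz i
        have h2 := gm_mono (a := u) (b := u) hrange hmono hmg hwg hmw i
        rw [hgz] at h1
        rw [hgw] at h2
        rw [hmi i]
        exact le_min h1 h2
      obtain ⟨⟨hpg, -⟩, hpm, hpfix⟩ :=
        stab_down (gm f u u) (fun v => inGrid3 n v ∧ gm f u u v ≤ v)
          (fun v hv => hv.1) hQT (fun v hv => hv.2) m hQm
      set p := (gm f u u)^[3*n] m with hpdef
      clear_value p
      have hpne : ∀ i : Fin 3, i ≠ 2 → f p i = p i := by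
        intro i hi
        have h := congrFun hpfix i
        rwa [gm_ne f u u p hi] at h
      have hp2 : p 2 = u := by
        have h := congrFun hpfix 2
        rw [gm_two] at h
        rw [← h, max_eq_left (min_le_left _ _)]
      have hfp2 : f p 2 = u - 1 := by
        have h1 : f p 2 ≤ f w 2 := hmono p w hpg hwg (hpm.trans hmw) 2
        have h2 := hcoordunit p hpg 2
        rw [hfw2eq] at h1
        omega
      -- q : fixed point of gm f u u above z ⊔ w, with f q 2 = u + 1
      set m' : Fin 3 → ℤ := fun i => max (z i) (w i) with hm'
      clear_value m'
      have hm'i : ∀ i, m' i = max (z i) (w i) := fun i => by simp only [hm']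
      have hm'g : inGrid3 n m' := by
        intro i
        rw [hm'i i]
        exact ⟨(hzg i).1.trans (le_max_left _ _), max_le (hzg i).2 (hwg i).2⟩
      have hzm' : z ≤ m' := by intro i; rw [hm'i i]; exact le_max_left _ _
      have hwm' : w ≤ m' := by intro i; rw [hm'i i]; exact le_max_right _ _
      have hQm' : inGrid3 n m' ∧ m' ≤ gm f u u m' := by
        refine ⟨hm'g, fun i => ?_⟩
        have h1 := gm_mono (a := u) (b := u) hrange hmono hzg hm'g hzm' i
        have h2 := gm_mono (a := u) (b := u) hrange hmono hwg hm'g hwm' i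
        rw [hgz] at h1
        rw [hgw] at h2
        rw [hm'i i]
        exact max_le h1 h2
      obtain ⟨⟨hqg, -⟩, hqm, hqfix⟩ :=
        stab_up (gm f u u) (fun v => inGrid3 n v ∧ v ≤ gm f u u v)
          (fun v hv => hv.1) hQ'T (fun v hv => hv.2) m' hQm'
      set q := (gm f u u)^[3*n] m' with hqdef
      clear_value q
      have hqne : ∀ i : Fin 3, i ≠ 2 → f q i = q i := by
        intro i hi
        have h := congrFun hqfix i
        rwa [gm_ne f u u q hi] at h
      have hq2 : q 2 = u := by
        have h := congrFun hqfix 2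
        rw [gm_two] at h
        rw [← h, max_eq_left (min_le_left _ _)]
      have hfq2 : f q 2 = u + 1 := by
        have h1 : f z 2 ≤ f q 2 := hmono z q hzg hqg (hzm'.trans hqm) 2
        have h2 := hcoordunit q hqg 2
        rw [hfz2eq] at h1
        omega
      have hpq : p ≤ q := fun i => (hpm i).trans ((hmz i).trans ((hzm' i).trans (hqm i)))
      -- the chain from p to q
      set d := linf3 q p with hd
      clear_value d
      have hqp : ∀ i, q i ≤ p i + (d : ℤ) := by
        intro i
        have h1 := coord_le_linf3 q p i
        have h2 := hpq i
        omega
      set cc : ℕ → (Fin 3 → ℤ) := fun k i => min (q i) (p i + (k : ℤ)) with hcc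
      clear_value cc
      have hccg : ∀ k, inGrid3 n (cc k) := by
        intro k i
        simp only [hcc]
        constructor
        · refine le_min (hqg i).1 ?_
          have := (hpg i).1
          have : (0:ℤ) ≤ (k:ℤ) := Int.natCast_nonneg k
          omega
        · exact (min_le_left _ _).trans (hqg i).2
      have hcc0 : cc 0 = p := by
        funext i
        simp only [hcc, Nat.cast_zero, add_zero]
        exact min_eq_right (hpq i)
      have hccd : cc d = q := by
        funext i
        simp only [hcc]
        exact min_eq_left (hqp i)
      have hcc2 : ∀ k, cc k 2 = u := by
        intro k
        simp only [hcc]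
        rw [hq2, hp2]
        refine min_eq_left ?_
        have : (0:ℤ) ≤ (k:ℤ) := Int.natCast_nonneg k
        omega
      have hlin_cp : ∀ k, linf3 (cc k) p ≤ k := by
        intro k
        rw [linf3_le_iff]
        intro j
        simp only [hcc]
        have h1 : p j ≤ min (q j) (p j + (k:ℤ)) := by
          refine le_min (hpq j) ?_
          have : (0:ℤ) ≤ (k:ℤ) := Int.natCast_nonneg k
          omega
        have h2 : min (q j) (p j + (k:ℤ)) ≤ p j + (k:ℤ) := min_le_right _ _
        omega
      have hccq : ∀ k, cc k ≤ q := by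
        intro k i
        simp only [hcc]
        exact min_le_left _ _
      have hQcc : ∀ k, inGrid3 n (cc k) ∧ gm f u u (cc k) ≤ cc k := by
        intro k
        refine ⟨hccg k, fun i => ?_⟩
        by_cases h : i = (2 : Fin 3)
        · subst h
          rw [gm_two, hcc2 k]
          exact max_le le_rfl (min_le_left _ _)
        · rw [gm_ne f u u _ h]
          have hup1 : f (cc k) i ≤ q i := by
            have h1 : f (cc k) i ≤ f q i := hmono _ _ (hccg k) hqg (hccq k) i
            rwa [hqne i h] at h1
          have hup2 : f (cc k) i ≤ p i + (k:ℤ) := by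
            have h1 : linf3 (f (cc k)) (f p) ≤ linf3 (cc k) p := hnonexp _ _ (hccg k) hpg
            have h2 := le_trans (coord_le_linf3 (f (cc k)) (f p) i) (h1.trans (hlin_cp k))
            have h3 := hpne i h
            omega
          have hcki : cc k i = min (q i) (p i + (k:ℤ)) := by simp only [hcc]
          rw [hcki]
          exact le_min hup1 hup2
      -- iterate to fixed points r k
      have hrfacts : ∀ k, inGrid3 n ((gm f u u)^[3*n] (cc k)) ∧
          gm f u u ((gm f u u)^[3*n] (cc k)) = (gm f u u)^[3*n] (cc k) := by
        intro k
        obtain ⟨⟨hg, -⟩, -, hfix⟩ :=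
          stab_down (gm f u u) (fun v => inGrid3 n v ∧ gm f u u v ≤ v)
            (fun v hv => hv.1) hQT (fun v hv => hv.2) (cc k) (hQcc k)
        exact ⟨hg, hfix⟩
      set r : ℕ → (Fin 3 → ℤ) := fun k => (gm f u u)^[3*n] (cc k) with hr
      clear_value r
      have hrg : ∀ k, inGrid3 n (r k) := by
        intro k; simp only [hr]; exact (hrfacts k).1
      have hrfix : ∀ k, gm f u u (r k) = r k := by
        intro k; simp only [hr]; exact (hrfacts k).2
      have hr0 : r 0 = p := by
        simp only [hr]
        rw [hcc0]
        exact Function.iterate_fixed hpfix (3*n)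
      have hrd : r d = q := by
        simp only [hr]
        rw [hccd]
        exact Function.iterate_fixed hqfix (3*n)
      have hr2 : ∀ k, r k 2 = u := by
        intro k
        have h := congrFun (hrfix k) 2
        rw [gm_two] at h
        rw [← h, max_eq_left (min_le_left _ _)]
      have hrne : ∀ k, ∀ i : Fin 3, i ≠ 2 → f (r k) i = r k i := by
        intro k i hi
        have h := congrFun (hrfix k) i
        rwa [gm_ne f u u _ hi] at h
      have hrstep : ∀ k, linf3 (r (k+1)) (r k) ≤ 1 := by
        intro k
        have h1 : linf3 (r (k+1)) (r k) ≤ linf3 (cc (k+1)) (cc k) := by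
          simp only [hr]
          exact iter_nonexp (gm f u u) (fun v => inGrid3 n v ∧ gm f u u v ≤ v)
            hQT (fun a b ha hb => gm_nonexp hnonexp ha.1 hb.1) _ _
            (hQcc (k+1)) (hQcc k) (3*n)
        have h2 : linf3 (cc (k+1)) (cc k) ≤ 1 := by
          rw [linf3_le_iff]
          intro j
          simp only [hcc]
          push_cast
          have a1 : min (q j) (p j + ((k:ℤ)+1)) ≤ p j + ((k:ℤ)+1) := min_le_right _ _
          have a2 : min (q j) (p j + (k:ℤ)) ≤ min (q j) (p j + ((k:ℤ)+1)) :=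
            min_le_min le_rfl (by omega)
          have a3 := min_choice (q j) (p j + (k:ℤ))
          have a4 : min (q j) (p j + ((k:ℤ)+1)) ≤ q j := min_le_left _ _
          omega
        exact h1.trans h2
      have hsig : ∀ k, ((f (r (k+1)) 2 - u) - (f (r k) 2 - u)).natAbs ≤ 1 := by
        intro k
        have h1 : linf3 (f (r (k+1))) (f (r k)) ≤ 1 :=
          le_trans (hnonexp _ _ (hrg (k+1)) (hrg k)) (hrstep k)
        have h2 := le_trans (coord_le_linf3 (f (r (k+1))) (f (r k)) 2) h1
        omega
      obtain ⟨k, hkd, hk0⟩ := ivt (fun k => f (r k) 2 - u) d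
        (by show f (r 0) 2 - u = -1; rw [hr0, hfp2]; ring)
        (by show f (r d) 2 - u = 1; rw [hrd, hfq2]; ring)
        hsig
      have hk0' : f (r k) 2 - u = 0 := hk0
      have hfrk2 : f (r k) 2 = u := by omega
      refine ⟨r k, hrg k, funext fun i => ?_, Or.inr (hr2 k)⟩
      by_cases h : i = (2 : Fin 3)
      · subst h; rw [hfrk2, hr2 k]
      · exact hrne k i h
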